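/- Let 𝔐 be a graph-determined variety of rings. Then there exists a positive integer m of the form m = q₁^{β₁} q₂^{β₂} ⋯ q_t^{β_t}, where q₁, …, q_t are pairwise distinct primes and βᵢ ≤ 3 for all i ≤ t (equivalently, m is not divisible by the fourth power of any prime), such that every ring R ∈ 𝔐 satisfies m·x = 0 for all x ∈ R. -/

import Mathlib

/-- An element of a ring is a (one-sided or two-sided) zero-divisor: it is nonzero and
kills some nonzero element on the left or on the right. -/
def IsZD {R : Type*} [NonUnitalNonAssocRing R] (x : R) : Prop :=
  x ≠ 0 ∧ ∃ y : R, y ≠ 0 ∧ (x * y = 0 ∨ y * x = 0)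

/-- The zero-divisor graph `Γ(R)` of a ring `R`: vertices are the nonzero zero-divisors,
and distinct vertices `x`, `y` are adjacent iff `x*y = 0` or `y*x = 0`. -/
def zdvGraph (R : Type*) [NonUnitalNonAssocRing R] :
    SimpleGraph {x : R // IsZD x} where
  Adj a b := a ≠ b ∧ ((a : R) * (b : R) = 0 ∨ (b : R) * (a : R) = 0)
  symm := by
    constructor
    rintro a b ⟨hne, h⟩
    exact ⟨hne.symm, h.symm⟩
  loopless := by
    constructor
    rintro a ⟨hne, -⟩
    exact hne rfl

/-- A variety of (associative, not necessarily unital or commutative) rings: a class of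
rings closed under isomorphisms, subrings, homomorphic images and arbitrary products. -/
structure RingVariety : Type 1 where
  mem : ∀ (R : Type) [NonUnitalRing R], Prop
  closed_iso : ∀ (R S : Type) [NonUnitalRing R] [NonUnitalRing S],
    (R ≃+* S) → mem R → mem S
  closed_subring : ∀ (R : Type) [NonUnitalRing R] (S : NonUnitalSubring R),
    mem R → mem S
  closed_image : ∀ (R S : Type) [NonUnitalRing R] [NonUnitalRing S] (f : R →ₙ+* S),
    Function.Surjective f → mem R → mem S
  closed_prod : ∀ (ι : Type) (R : ι → Type) [∀ i, NonUnitalRing (R i)],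
    (∀ i, mem (R i)) → mem (∀ i, R i)

/-- A variety is graph-determined if any two finite rings in it with isomorphic
zero-divisor graphs are isomorphic. -/
def GraphDetermined (M : RingVariety) : Prop :=
  ∀ (R S : Type) [NonUnitalRing R] [NonUnitalRing S], Finite R → Finite S →
    M.mem R → M.mem S →
    Nonempty (zdvGraph R ≃g zdvGraph S) → Nonempty (R ≃+* S)

/-- The null ring on an abelian group `A`: all products are zero. -/
def NullRing (A : Type*) := A

instance {A : Type*} [AddCommGroup A] : NonUnitalRing (NullRing A) :=
  { (inferInstanceAs (AddCommGroup A) : AddCommGroup A) with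
    mul := fun _ _ => (0 : A)
    left_distrib := fun _ _ _ => (add_zero (0 : A)).symm
    right_distrib := fun _ _ _ => (add_zero (0 : A)).symm
    zero_mul := fun _ => rfl
    mul_zero := fun _ => rfl
    mul_assoc := fun _ _ _ => rfl }

/-!
Let `e` be the least positive integer with `e • x = 0` throughout `𝔐`. If `q ^ 4 ∣ e`, some ring
of `𝔐` has an element whose additive order is divisible by `q ^ 4`; a multiple `z` of it has order
`q ^ 2` and `z * z = 0`, so `𝔐` contains the null ring on `ℤ/q²`, hence also the null ring on
`(ℤ/q)²`. Both have the complete graph on `q² - 1` vertices as zero-divisor graph, yet they are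
not isomorphic.

If there is no such `e`, no identity `p(x) = 0` of `𝔐` with `p(0) = 0` has a nonzero linear
coefficient: `2ⁿ p(X) - p(2X)` is again an identity of lower degree, down to `c • x = 0`. Hence the
subring generated by a generic element of a product of rings of `𝔐` maps onto the null ring `ℤ`
by "linear coefficient", and `ℤ/4` gives the same contradiction.
-/

open Polynomial

namespace Polynomial

variable {R S : Type*} [NonUnitalRing R] [NonUnitalRing S]

/-- `p(y)` for `y` in a non-unital ring, computed in `Unitization ℤ R`; the constant term of `p`
is dropped. -/
noncomputable def evalNonUnital (y : R) : ℤ[X] →ₗ[ℤ] R :=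
  Unitization.sndHom ℤ ℤ R ∘ₗ (aeval (y : Unitization ℤ R)).toLinearMap

lemma evalNonUnital_apply (y : R) (p : ℤ[X]) :
    evalNonUnital y p = (aeval (y : Unitization ℤ R) p).snd := rfl

lemma fst_aeval_inr (y : R) (p : ℤ[X]) : (aeval (y : Unitization ℤ R) p).fst = p.coeff 0 := by
  rw [← Unitization.fstHom_apply, ← aeval_algHom_apply, Unitization.fstHom_apply,
    Unitization.fst_inr, coeff_zero_eq_aeval_zero]

lemma aeval_inr_of_coeff_zero_eq_zero (y : R) {p : ℤ[X]} (hp : p.coeff 0 = 0) :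
    aeval (y : Unitization ℤ R) p = (evalNonUnital y p : Unitization ℤ R) :=
  Unitization.ext (by rw [fst_aeval_inr, hp, Unitization.fst_inr]) (Unitization.snd_inr ℤ _).symm

@[simp] lemma evalNonUnital_X (y : R) : evalNonUnital y X = y := by
  simp [evalNonUnital_apply]

lemma evalNonUnital_mul (y : R) {p q : ℤ[X]} (hp : p.coeff 0 = 0) (hq : q.coeff 0 = 0) :
    evalNonUnital y (p * q) = evalNonUnital y p * evalNonUnital y q := by
  rw [evalNonUnital_apply, map_mul, aeval_inr_of_coeff_zero_eq_zero y hp,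
    aeval_inr_of_coeff_zero_eq_zero y hq, ← Unitization.inr_mul, Unitization.snd_inr]

lemma evalNonUnital_comp_C_mul_X (y : R) (c : ℤ) (p : ℤ[X]) :
    evalNonUnital y (p.comp (C c * X)) = evalNonUnital (c • y) p := by
  simp [evalNonUnital_apply, aeval_comp, Unitization.inr_smul]

lemma map_evalNonUnital (f : R →ₙ+* S) (y : R) (p : ℤ[X]) :
    f (evalNonUnital y p) = evalNonUnital (f y) p := by
  let F : Unitization ℤ R →ₐ[ℤ] Unitization ℤ S := Unitization.lift
    ((Unitization.inrNonUnitalAlgHom ℤ S).comp { f with map_smul' := map_zsmul f })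
  have hF : ∀ x, (F x).snd = f x.snd := fun x => by
    simp only [F, Unitization.lift_apply, NonUnitalAlgHom.toAlgHom_apply,
      Unitization.algebraMap_eq_inl, Unitization.snd_add, Unitization.snd_inl, zero_add]
    rfl
  rw [evalNonUnital_apply, evalNonUnital_apply, ← hF, ← aeval_algHom_apply]
  simp [F, Unitization.lift_apply]

theorem exists_smul_X_mem_of_comp_mem (I : AddSubgroup ℤ[X])
    (hI : ∀ p ∈ I, p.comp (C 2 * X) ∈ I) {p : ℤ[X]} (hp : p ∈ I) (h0 : p.coeff 0 = 0)
    (h1 : p.coeff 1 ≠ 0) : ∃ c : ℤ, c ≠ 0 ∧ c • X ∈ I := by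
  induction hn : p.natDegree using Nat.strong_induction_on generalizing p with
  | _ n ih =>
  by_cases hle : n ≤ 1
  · refine ⟨p.coeff 1, h1, ?_⟩
    have hlin := eq_X_add_C_of_natDegree_le_one (hn ▸ hle : p.natDegree ≤ 1)
    rw [h0, C_0, add_zero, ← smul_eq_C_mul] at hlin
    rwa [← hlin]
  -- `2ⁿ p(X) - p(2X)` kills the leading term and keeps a nonzero linear term
  set p' := (2 : ℤ) ^ n • p - p.comp (C 2 * X) with hp'
  have hcoeff : ∀ k, p'.coeff k = (2 ^ n - 2 ^ k) * p.coeff k := fun k => by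
    rw [hp', coeff_sub, coeff_smul, comp_C_mul_X_coeff, smul_eq_mul, sub_mul, mul_comm (p.coeff k)]
  have h1' : p'.coeff 1 ≠ 0 := by
    rw [hcoeff]
    exact mul_ne_zero (sub_ne_zero.mpr (pow_lt_pow_right₀ one_lt_two (by omega)).ne') h1
  have hdeg : p'.natDegree < n := by
    refine lt_of_le_of_ne (natDegree_le_iff_coeff_eq_zero.mpr fun k hk => ?_) fun hdeg => ?_
    · rw [hcoeff, coeff_eq_zero_of_natDegree_lt (hn ▸ hk), mul_zero]
    · have hlead : p'.leadingCoeff = 0 := by rw [leadingCoeff, hdeg, hcoeff, sub_self, zero_mul]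
      exact h1' (by rw [leadingCoeff_eq_zero.mp hlead, coeff_zero])
  exact ih _ hdeg (sub_mem (zsmul_mem hp _) (hI p hp)) (by rw [hcoeff, h0, mul_zero]) h1' rfl

end Polynomial

namespace NullRing

variable {A B : Type*} [AddCommGroup A] [AddCommGroup B]

instance [Finite A] : Finite (NullRing A) := ‹Finite A›

lemma mul_def (x y : NullRing A) : x * y = 0 := rfl

def map (f : A →+ B) : NullRing A →ₙ+* NullRing B where
  toFun := f
  map_zero' := f.map_zero
  map_add' := f.map_add
  map_mul' _ _ := f.map_zero

end NullRing

section ZeroProduct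

variable {R S : Type*} [NonUnitalNonAssocRing R] [NonUnitalNonAssocRing S]

lemma isZD_iff_ne_zero_of_mul_eq_zero (h : ∀ x y : R, x * y = 0) (x : R) : IsZD x ↔ x ≠ 0 :=
  ⟨And.left, fun hx => ⟨hx, x, hx, Or.inl (h x x)⟩⟩

lemma zdvGraph_eq_top_of_mul_eq_zero (h : ∀ x y : R, x * y = 0) : zdvGraph R = ⊤ := by
  ext a b
  exact ⟨And.left, fun hab => ⟨hab, Or.inl (h a b)⟩⟩

lemma nonempty_zdvGraph_iso_of_mul_eq_zero [Finite R] [Finite S] (hR : ∀ x y : R, x * y = 0)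
    (hS : ∀ x y : S, x * y = 0) (hcard : Nat.card R = Nat.card S) :
    Nonempty (zdvGraph R ≃g zdvGraph S) := by
  classical
  obtain ⟨e⟩ := Finite.card_eq.mp hcard
  let e₀ := e.trans (Equiv.swap (e 0) 0)
  have he₀ : e₀ 0 = 0 := by simp [e₀]
  let v : {x : R // IsZD x} ≃ {x : S // IsZD x} := e₀.subtypeEquiv fun x => by
    rw [isZD_iff_ne_zero_of_mul_eq_zero hR, isZD_iff_ne_zero_of_mul_eq_zero hS,
      e₀.injective.ne_iff' he₀]
  rw [zdvGraph_eq_top_of_mul_eq_zero hR, zdvGraph_eq_top_of_mul_eq_zero hS]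
  exact ⟨SimpleGraph.Iso.completeGraph v⟩

end ZeroProduct

lemma Nat.pow_dvd_of_dvd_of_not_dvd_div {q k n e : ℕ} (hq : q.Prime) (hk : q ^ k ∣ e)
    (hn : n ∣ e) (hn' : ¬ n ∣ e / q) : q ^ k ∣ n := by
  obtain ⟨m, rfl⟩ := hn
  have hqm : ¬ q ∣ m := fun ⟨c, hc⟩ =>
    hn' ⟨c, by rw [hc, mul_left_comm, Nat.mul_div_cancel_left _ hq.pos]⟩
  exact (Nat.Coprime.pow_left k (hq.coprime_iff_not_dvd.mpr hqm)).dvd_of_dvd_mul_right hk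

section AddOrder

variable {R : Type*} [NonUnitalRing R]

lemma exists_mul_self_eq_zero_addOrderOf_eq_sq {x : R} {q : ℕ} (hx : addOrderOf x ≠ 0)
    (hq : q ^ 4 ∣ addOrderOf x) : ∃ z : R, z * z = 0 ∧ addOrderOf z = q ^ 2 := by
  obtain ⟨m, hm⟩ := hq
  have hfac : addOrderOf x = q ^ 2 * (q ^ 2 * m) := by rw [hm]; ring
  refine ⟨(q ^ 2 * m) • x, ?_, ?_⟩
  · rw [smul_mul_smul_comm, show (q ^ 2 * m) * (q ^ 2 * m) = m * addOrderOf x by rw [hm]; ring,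
      mul_smul, ← smul_mul_assoc, addOrderOf_nsmul_eq_zero, zero_mul, smul_zero]
  · rw [addOrderOf_nsmul_of_dvd (right_ne_zero_of_mul (hfac ▸ hx)) (Dvd.intro_left _ hfac.symm),
      hfac, Nat.mul_div_cancel _ (Nat.pos_of_ne_zero (right_ne_zero_of_mul (hfac ▸ hx)))]

end AddOrder

namespace RingVariety

variable (M : RingVariety)

def IsTorsionBy (m : ℕ) : Prop :=
  ∀ (R : Type) [NonUnitalRing R], M.mem R → ∀ x : R, m • x = 0

def identities : AddSubgroup ℤ[X] where
  carrier := {p | ∀ (R : Type) [NonUnitalRing R], M.mem R → ∀ y : R, evalNonUnital y p = 0}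
  add_mem' hp hq R _ hR y := by rw [map_add, hp R hR y, hq R hR y, add_zero]
  zero_mem' _ _ _ _ := map_zero _
  neg_mem' hp R _ hR y := by rw [map_neg, hp R hR y, neg_zero]

variable {M}

lemma comp_C_mul_X_mem_identities {p : ℤ[X]} (hp : p ∈ M.identities) (c : ℤ) :
    p.comp (C c * X) ∈ M.identities := fun R _ hR y => by
  rw [evalNonUnital_comp_C_mul_X]
  exact hp R hR _

lemma isTorsionBy_natAbs_of_smul_X_mem_identities {c : ℤ} (hc : c • X ∈ M.identities) :
    M.IsTorsionBy c.natAbs := fun R _ hR x =>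
  natAbs_nsmul_eq_zero.mpr (by simpa only [map_zsmul, evalNonUnital_X] using hc R hR x)

lemma coeff_one_eq_zero_of_mem_identities (hM : ∀ m, 0 < m → ¬ M.IsTorsionBy m) {p : ℤ[X]}
    (hp : p ∈ M.identities) (h0 : p.coeff 0 = 0) : p.coeff 1 = 0 := by
  by_contra h1
  obtain ⟨c, hc, hcX⟩ :=
    exists_smul_X_mem_of_comp_mem _ (fun q hq => comp_C_mul_X_mem_identities hq 2) hp h0 h1
  exact hM _ (Int.natAbs_pos.mpr hc) (isTorsionBy_natAbs_of_smul_X_mem_identities hcX)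

lemma mem_of_injective {R S : Type} [NonUnitalRing R] [NonUnitalRing S] (f : R →ₙ+* S)
    (hf : Function.Injective f) (hS : M.mem S) : M.mem R :=
  M.closed_iso _ _ (RingEquiv.ofBijective f.rangeRestrict
    ⟨fun _ _ h => hf (congrArg Subtype.val h), f.rangeRestrict_surjective⟩).symm
    (M.closed_subring S f.range hS)

lemma mem_of_surjective_of_ker_le {A B C : Type} [NonUnitalRing A] [NonUnitalRing B]
    [NonUnitalRing C] (f : A →ₙ+* B) (hf : Function.Surjective f) (g : A →ₙ+* C)
    (hg : Function.Surjective g) (hfg : ∀ a, f a = 0 → g a = 0) (hB : M.mem B) : M.mem C := by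
  have hlift : ∀ a, g (Function.surjInv hf (f a)) = g a := fun a => by
    rw [← sub_eq_zero, ← map_sub]
    exact hfg _ (by rw [map_sub, Function.surjInv_eq hf, sub_self])
  let h : B →ₙ+* C :=
    { toFun := g ∘ Function.surjInv hf
      map_zero' := by simpa using hlift 0
      map_add' := fun b b' => by
        obtain ⟨⟨a, rfl⟩, ⟨a', rfl⟩⟩ := And.intro (hf b) (hf b')
        simp only [Function.comp_apply, ← map_add, hlift]
      map_mul' := fun b b' => by
        obtain ⟨⟨a, rfl⟩, ⟨a', rfl⟩⟩ := And.intro (hf b) (hf b')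
        simp only [Function.comp_apply, ← map_mul, hlift] }
  refine M.closed_image B C h (fun c => ?_) hB
  obtain ⟨a, rfl⟩ := hg c
  exact ⟨f a, hlift a⟩

lemma mem_nullRing_of_surjective {A B : Type} [AddCommGroup A] [AddCommGroup B] (f : A →+ B)
    (hf : Function.Surjective f) (hA : M.mem (NullRing A)) : M.mem (NullRing B) :=
  M.closed_image _ _ (NullRing.map f) hf hA

lemma mem_nullRing_zmod_addOrderOf {R : Type} [NonUnitalRing R] (hR : M.mem R) {z : R}
    (hz : z * z = 0) : M.mem (NullRing (ZMod (addOrderOf z))) := by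
  let g : ZMod (addOrderOf z) →+ R :=
    ZMod.lift _ ⟨zmultiplesHom R z, by simp [addOrderOf_nsmul_eq_zero]⟩
  have hg : ∀ k : ℤ, g k = k • z := fun k => by simp [g]
  let f : NullRing (ZMod (addOrderOf z)) →ₙ+* R :=
    { g with
      map_mul' := fun a b => by
        obtain ⟨⟨k, rfl⟩, ⟨l, rfl⟩⟩ := And.intro (ZMod.intCast_surjective a)
          (ZMod.intCast_surjective b)
        change g 0 = g k * g l
        rw [map_zero, hg, hg, smul_mul_smul_comm, hz, smul_zero] }
  refine mem_of_injective f ((injective_iff_map_eq_zero f).mpr fun a ha => ?_) hR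
  obtain ⟨k, rfl⟩ := ZMod.intCast_surjective a
  change g k = 0 at ha
  rwa [hg, ← addOrderOf_dvd_iff_zsmul_eq_zero, ← ZMod.intCast_zmod_eq_zero_iff_dvd] at ha

variable (M) in
lemma exists_forall_evalNonUnital_eq_zero_mem_identities :
    ∃ (P : Type) (_ : NonUnitalRing P), M.mem P ∧
      ∃ X : P, ∀ p : ℤ[X], evalNonUnital X p = 0 → p ∈ M.identities := by
  have hwit : ∀ p : {p : ℤ[X] // p ∉ M.identities}, ∃ (R : Type) (_ : NonUnitalRing R),
      M.mem R ∧ ∃ y : R, evalNonUnital y p.1 ≠ 0 := fun ⟨p, hp⟩ => by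
    simpa [identities] using hp
  choose R inst hR y hy using hwit
  refine ⟨∀ i, R i, inferInstance, M.closed_prod _ R hR, y, fun p hp => ?_⟩
  by_contra hnot
  apply hy ⟨p, hnot⟩
  simpa [hp] using (map_evalNonUnital (Pi.evalNonUnitalRingHom R ⟨p, hnot⟩) y p).symm

lemma mem_nullRing_int_of_forall_not_isTorsionBy (hM : ∀ m, 0 < m → ¬ M.IsTorsionBy m) :
    M.mem (NullRing ℤ) := by
  obtain ⟨P, _, hP, X₀, hX₀⟩ := M.exists_forall_evalNonUnital_eq_zero_mem_identities
  let J := TwoSidedIdeal.ker (constantCoeff : ℤ[X] →+* ℤ)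
  have hJ : ∀ p : J, (p : ℤ[X]).coeff 0 = 0 := fun p => by
    simpa using (TwoSidedIdeal.mem_ker constantCoeff).mp p.2
  let ev : J →ₙ+* P :=
    { toFun := fun p => evalNonUnital X₀ p
      map_zero' := map_zero _
      map_add' := fun _ _ => map_add _ _ _
      map_mul' := fun p q => evalNonUnital_mul X₀ (hJ p) (hJ q) }
  let linearCoeff : J →ₙ+* NullRing ℤ :=
    { toFun := fun p => (p : ℤ[X]).coeff 1
      map_zero' := coeff_zero (R := ℤ) 1
      map_add' := fun _ _ => coeff_add (R := ℤ) _ _ 1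
      map_mul' := fun p q => by
        change ((p : ℤ[X]) * q).coeff 1 = 0
        rw [mul_coeff_one, hJ p, hJ q, zero_mul, mul_zero, add_zero] }
  refine mem_of_surjective_of_ker_le ev.rangeRestrict ev.rangeRestrict_surjective linearCoeff
    (fun c => ⟨⟨C (R := ℤ) c * X, by simp [J, TwoSidedIdeal.mem_ker]⟩,
      (coeff_C_mul_X (R := ℤ) c 1).trans (if_pos rfl)⟩)
    (fun p hp => coeff_one_eq_zero_of_mem_identities hM (hX₀ _ (congrArg Subtype.val hp)) (hJ p))
    (M.closed_subring P ev.range hP)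

lemma mem_nullRing_zmod_sq_of_not_isTorsionBy_div {e q : ℕ} (hq : q.Prime)
    (he : M.IsTorsionBy e) (he0 : e ≠ 0) (hq4 : q ^ 4 ∣ e) (hmin : ¬ M.IsTorsionBy (e / q)) :
    M.mem (NullRing (ZMod (q ^ 2))) := by
  simp only [IsTorsionBy, not_forall] at hmin
  obtain ⟨R, _, hR, x, hx⟩ := hmin
  have hdvd : addOrderOf x ∣ e := addOrderOf_dvd_of_nsmul_eq_zero (he R hR x)
  have hx4 : q ^ 4 ∣ addOrderOf x := Nat.pow_dvd_of_dvd_of_not_dvd_div hq hq4 hdvd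
    fun h => hx (addOrderOf_dvd_iff_nsmul_eq_zero.mp h)
  obtain ⟨z, hz, hzq⟩ :=
    exists_mul_self_eq_zero_addOrderOf_eq_sq (ne_zero_of_dvd_ne_zero he0 hdvd) hx4
  exact hzq ▸ mem_nullRing_zmod_addOrderOf hR hz

end RingVariety

theorem GraphDetermined.not_mem_nullRing_zmod_sq {M : RingVariety} (hgd : GraphDetermined M)
    {q : ℕ} (hq : q.Prime) : ¬ M.mem (NullRing (ZMod (q ^ 2))) := by
  intro hsq
  have : NeZero q := ⟨hq.ne_zero⟩
  have hdvd : q ∣ q ^ 2 := dvd_pow_self q two_ne_zero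
  have hprod : M.mem (Fin 2 → NullRing (ZMod q)) := M.closed_prod _ _ fun _ =>
    M.mem_nullRing_of_surjective (ZMod.castHom hdvd (ZMod q)).toAddMonoidHom
      (ZMod.castHom_surjective hdvd) hsq
  have hcard : Nat.card (NullRing (ZMod (q ^ 2))) = Nat.card (Fin 2 → NullRing (ZMod q)) := by
    simp [NullRing, sq]
  obtain ⟨f⟩ := hgd _ _ inferInstance inferInstance hsq hprod
    (nonempty_zdvGraph_iso_of_mul_eq_zero (R := NullRing _) NullRing.mul_def
      (fun x y => funext fun i => NullRing.mul_def (x i) (y i)) hcard)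
  let one : NullRing (ZMod (q ^ 2)) := (1 : ZMod (q ^ 2))
  have hone : q • one ≠ 0 := by
    change q • (1 : ZMod (q ^ 2)) ≠ 0
    rw [nsmul_eq_mul, mul_one, Ne, ZMod.natCast_eq_zero_iff]
    exact fun h => (Nat.le_of_dvd hq.pos h).not_gt (by nlinarith [hq.two_le])
  have hkill : q • f one = 0 := funext fun i => by
    have hq0 : ∀ c : ZMod q, q • c = 0 := fun c => by
      rw [nsmul_eq_mul, ZMod.natCast_self, zero_mul]
    exact hq0 (f one i)
  exact hone (f.injective (by rw [map_nsmul, hkill, map_zero]))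

/-- If `𝔐` is a graph-determined variety, then `𝔐` satisfies an identity `m·x = 0`
for some positive integer `m` not divisible by the fourth power of any prime
(i.e. `m = q₁^β₁ ⋯ q_t^β_t` with the `qᵢ` pairwise distinct primes and all `βᵢ ≤ 3`). -/
theorem graphDetermined_char_identity (M : RingVariety) (hgd : GraphDetermined M) :
    ∃ m : ℕ, 0 < m ∧ (∀ q : ℕ, q.Prime → ¬ q ^ 4 ∣ m) ∧
      ∀ (R : Type) [inst : NonUnitalRing R], M.mem R → ∀ x : R, m • x = 0 := by
  classical
  have hex : ∃ m, 0 < m ∧ M.IsTorsionBy m := by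
    by_contra! hM
    exact hgd.not_mem_nullRing_zmod_sq Nat.prime_two
      (M.mem_nullRing_of_surjective (Int.castAddHom _) ZMod.intCast_surjective
        (M.mem_nullRing_int_of_forall_not_isTorsionBy hM))
  obtain ⟨he, hte⟩ := Nat.find_spec hex
  refine ⟨Nat.find hex, he, fun q hq hq4 => ?_, hte⟩
  have hmin : ¬ M.IsTorsionBy (Nat.find hex / q) := fun h =>
    Nat.find_min hex (Nat.div_lt_self he hq.one_lt)
      ⟨Nat.div_pos (Nat.le_of_dvd he ((dvd_pow_self q four_ne_zero).trans hq4)) hq.pos, h⟩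
  exact hgd.not_mem_nullRing_zmod_sq hq
    (M.mem_nullRing_zmod_sq_of_not_isTorsionBy_div hq hte he.ne' hq4 hmin)
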